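/- Let Q be a nondegenerate (-1)^k-symmetric bilinear form on a finite-dimensional vector space V over a field of characteristic zero, and suppose k + ℓ is odd. If N ∈ End(V,Q) is the nilnegative element of a standard triple in End(V,Q) with isotypic multiplicities m_ℓ, then m_ℓ is even. -/

import Mathlib

open Module

/-!
The form `(u, v) ↦ Q u (N ^ ℓ v)` on `P(ℓ) = ker M ∩ {Y = ℓ}` is skew-symmetric, because `N` is
`Q`-skew and `k + ℓ` is odd, so it suffices to show that it is nondegenerate.

If `Q v (N ^ ℓ u) = 0` for all `v ∈ P(ℓ)`, then `N ^ ℓ u` is `Q`-orthogonal to all of `ker M`: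
it has weight `-ℓ`, so it is orthogonal to `(Y - ℓ)(ker M)`, and `ker M = (Y - ℓ)(ker M) + P(ℓ)`.
Hence `N ^ ℓ u ∈ (ker M)^⊥ = range M`. But for a highest weight vector `u ≠ 0` of weight `n`,
the bottom `N ^ n u` of its string is never in `range M`: a preimage may be chosen to be a
weight vector of weight `-n - 2`, and it is killed by `N ∘ M`, which forces its weight to be a
natural number.
-/

section Commutator

variable {K R : Type*} [Field K] [Ring R] [Algebra K R]

lemma lie_pow_of_lie_eq_smul {A X : R} {c : K} (h : ⁅A, X⁆ = c • X) (n : ℕ) :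
    ⁅A, X ^ n⁆ = (n * c) • X ^ n := by
  induction n with
  | zero => simp [Ring.lie_def]
  | succ n ih =>
    have hmul : ⁅A, X ^ n * X⁆ = ⁅A, X ^ n⁆ * X + X ^ n * ⁅A, X⁆ := by
      simp only [Ring.lie_def]; noncomm_ring
    rw [pow_succ, hmul, ih, h, smul_mul_assoc, mul_smul_comm, ← add_smul]
    push_cast; ring_nf

lemma isNilpotent_of_lie_eq_smul [CharZero K] [FiniteDimensional K R] {A X : R} {c : K}
    (h : ⁅A, X⁆ = c • X) (hc : c ≠ 0) : IsNilpotent X := by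
  by_contra hX
  have heigen (n : ℕ) :
      End.HasEigenvector (LinearMap.mulLeft K A - LinearMap.mulRight K A) (n * c) (X ^ n) := by
    refine ⟨End.mem_eigenspace_iff.2 ?_, fun h0 ↦ hX ⟨n, h0⟩⟩
    simpa [Ring.lie_def] using lie_pow_of_lie_eq_smul h n
  have hli : LinearIndependent K (fun n : ℕ ↦ X ^ n) :=
    End.eigenvectors_linearIndependent' _ (fun n : ℕ ↦ n * c)
      (fun m n hmn ↦ by simpa [hc] using hmn) _ heigen
  exact hli.finite.false

end Commutator

section StandardTriple

variable {K V : Type*} [Field K] [AddCommGroup V] [Module K V] {M Y N : End K V}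

lemma apply_apply_of_lie_eq {A B C : End K V} (h : ⁅A, B⁆ = C) (v : V) :
    A (B v) = B (A v) + C v := by
  rw [← h, Ring.lie_def]
  simp

lemma apply_pow_apply_of_lie_eq_smul {A X : End K V} {c μ : K} (h : ⁅A, X⁆ = c • X) {v : V}
    (hv : A v = μ • v) (n : ℕ) : A ((X ^ n) v) = (μ + n * c) • (X ^ n) v := by
  rw [apply_apply_of_lie_eq (lie_pow_of_lie_eq_smul h n), hv, map_smul, LinearMap.smul_apply,
    add_smul]

lemma apply_pow_succ_apply (hYN : ⁅Y, N⁆ = -((2 : K) • N)) (hMN : ⁅M, N⁆ = Y) (j : ℕ) (v : V) :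
    M ((N ^ (j + 1)) v) = (N ^ (j + 1)) (M v) + ((j : K) + 1) • (N ^ j) (Y v - (j : K) • v) := by
  induction j generalizing v with
  | zero => simp [apply_apply_of_lie_eq hMN]
  | succ j ih =>
    rw [pow_succ, Module.End.mul_apply, ih, apply_apply_of_lie_eq hMN,
      apply_apply_of_lie_eq hYN, pow_succ, Module.End.mul_apply, Module.End.mul_apply]
    simp only [map_add, map_sub, map_smul, LinearMap.neg_apply, LinearMap.smul_apply, map_neg]
    push_cast
    module

lemma exists_nat_eq_of_apply_eq_smul [CharZero K] (hYN : ⁅Y, N⁆ = -((2 : K) • N))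
    (hMN : ⁅M, N⁆ = Y) (hN : IsNilpotent N) {x : V} (hx : x ≠ 0) {μ : K} (hYx : Y x = μ • x)
    (hNMx : N (M x) = 0) : ∃ n : ℕ, μ = n ∧ (N ^ n) x ≠ 0 ∧ (N ^ (n + 1)) x = 0 := by
  obtain ⟨d, hd⟩ := hN
  obtain ⟨n, hn, hn1⟩ := Nat.exists_not_and_succ_of_not_zero_of_exists (p := fun j ↦ (N ^ j) x = 0)
    (by simpa using hx) ⟨d, by simp [hd]⟩
  refine ⟨n, ?_, hn, hn1⟩
  have h := apply_pow_succ_apply hYN hMN n x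
  rw [hn1, map_zero, pow_succ, Module.End.mul_apply, hNMx, map_zero, zero_add, hYx, ← sub_smul,
    map_smul, smul_smul, eq_comm, smul_eq_zero] at h
  rcases mul_eq_zero.1 (h.resolve_right hn) with h | h
  · exact absurd h (Nat.cast_add_one_ne_zero n)
  · exact sub_eq_zero.1 h

lemma semiconjBy_sub_smul_one_of_lie_eq_smul {A X : End K V} {a : K} (h : ⁅A, X⁆ = a • X)
    (b : K) : SemiconjBy X (A - b • 1) (A - (b + a) • 1) := by
  ext v
  simp only [Module.End.mul_apply, LinearMap.sub_apply, LinearMap.smul_apply, Module.End.one_apply,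
    map_sub, map_smul, apply_apply_of_lie_eq h]
  module

lemma apply_mem_ker_of_lie_eq_smul {a : K} (hYM : ⁅Y, M⁆ = a • M) {x : V} (hx : M x = 0) :
    M (Y x) = 0 := by
  simpa [hx] using (apply_apply_of_lie_eq hYM x).symm

lemma eq_zero_of_pow_sub_smul_apply_eq_zero {c a : K} (hYM : ⁅Y, M⁆ = a • M)
    (hc : ∀ x, M x = 0 → Y x = c • x → x = 0) (n : ℕ) {x : V} (hx : M x = 0)
    (hn : ((Y - c • 1) ^ n) x = 0) : x = 0 := by
  induction n generalizing x with
  | zero => simpa using hn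
  | succ n ih =>
    have hMx : M ((Y - c • 1) x) = 0 := by
      rw [← Module.End.mul_apply, (semiconjBy_sub_smul_one_of_lie_eq_smul hYM c).eq,
        Module.End.mul_apply, hx, map_zero]
    have hYx := ih hMx (by rwa [← Module.End.mul_apply, ← pow_succ])
    refine hc x hx ?_
    simpa [sub_eq_zero] using hYx

lemma exists_preimage_apply_eq_smul [FiniteDimensional K V] {a c : K} (hYM : ⁅Y, M⁆ = a • M)
    (hc : ∀ x, M x = 0 → Y x = c • x → x = 0) {w z : V} (hw : Y w = (c + a) • w)
    (hz : M z = w) : ∃ z₀, M z₀ = w ∧ Y z₀ = c • z₀ := by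
  -- `M` carries the Fitting decomposition of `Y - c` into that of `Y - (c + a)`, and `w` lies in
  -- the nilpotent part of the latter, so the nilpotent component of `z` is again a preimage.
  set T := Y - c • 1
  set T' := Y - (c + a) • 1
  have hMT (n : ℕ) : M * T ^ n = T' ^ n * M :=
    ((semiconjBy_sub_smul_one_of_lie_eq_smul hYM c).pow_right n).eq
  have hT'w : T' w = 0 := by simp [T', hw]
  obtain ⟨n, hn, hT, hT'⟩ := ((Filter.eventually_ge_atTop 1).and
    (T.eventually_isCompl_ker_pow_range_pow.and T'.eventually_isCompl_ker_pow_range_pow)).exists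
  obtain ⟨z₁, hz₁, z₂, ⟨y, rfl⟩, rfl⟩ := Submodule.mem_sup.1 (hT.sup_eq_top ▸ Submodule.mem_top :
    z ∈ LinearMap.ker (T ^ n) ⊔ LinearMap.range (T ^ n))
  have hMz₁ : (T' ^ n) (M z₁) = 0 := by
    rw [← Module.End.mul_apply, ← hMT, Module.End.mul_apply, LinearMap.mem_ker.1 hz₁, map_zero]
  have hMz₂ : M ((T ^ n) y) = 0 := by
    refine Submodule.disjoint_def.1 hT'.disjoint _ ?_ ⟨M y, (LinearMap.congr_fun (hMT n) y).symm⟩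
    have hT'nw : (T' ^ n) w = 0 := by
      obtain ⟨m, rfl⟩ := Nat.exists_eq_add_of_le' hn
      rw [pow_succ, Module.End.mul_apply, hT'w, map_zero]
    rwa [← hz, map_add, map_add, hMz₁, zero_add] at hT'nw
  have hMz₁w : M z₁ = w := by rw [← hz, map_add, hMz₂, add_zero]
  refine ⟨z₁, hMz₁w, ?_⟩
  have hTz₁ : T z₁ = 0 := by
    refine eq_zero_of_pow_sub_smul_apply_eq_zero hYM hc (n - 1) ?_ ?_
    · rw [← Module.End.mul_apply, ← pow_one T, hMT, pow_one, Module.End.mul_apply, hMz₁w, hT'w]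
    · rw [← Module.End.mul_apply, ← pow_succ, Nat.sub_add_cancel hn]
      exact LinearMap.mem_ker.1 hz₁
  simpa [T, sub_eq_zero] using hTz₁

variable [CharZero K] [FiniteDimensional K V]

lemma eq_zero_of_pow_apply_mem_range (hYM : ⁅Y, M⁆ = (2 : K) • M)
    (hYN : ⁅Y, N⁆ = -((2 : K) • N)) (hMN : ⁅M, N⁆ = Y) {n : ℕ} {u : V} (hMu : M u = 0)
    (hYu : Y u = (n : K) • u) (hu : (N ^ n) u ∈ LinearMap.range M) : u = 0 := by
  have hYN' : ⁅Y, N⁆ = (-2 : K) • N := by rw [hYN, neg_smul]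
  have hN : IsNilpotent N := isNilpotent_of_lie_eq_smul hYN' (by norm_num)
  have hnotNat (m : ℕ) : -(n : K) - 2 ≠ m := by
    rw [ne_eq, sub_eq_iff_eq_add, ← sub_eq_zero]
    exact_mod_cast (by omega : -(n : ℤ) - (m + 2) ≠ 0)
  by_contra hu0
  obtain ⟨m, hm, hNu, hNu1⟩ := exists_nat_eq_of_apply_eq_smul hYN hMN hN hu0 hYu (by simp [hMu])
  obtain rfl : n = m := by exact_mod_cast hm
  have hc (x : V) (hMx : M x = 0) (hYx : Y x = (-(n : K) - 2) • x) : x = 0 := by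
    by_contra hx
    obtain ⟨m, hm, -⟩ := exists_nat_eq_of_apply_eq_smul hYN hMN hN hx hYx (by simp [hMx])
    exact hnotNat m hm
  have hw : Y ((N ^ n) u) = (-(n : K) - 2 + 2) • (N ^ n) u := by
    rw [apply_pow_apply_of_lie_eq_smul hYN' hYu]
    ring_nf
  obtain ⟨z, hz⟩ := hu
  obtain ⟨z₀, hMz₀, hYz₀⟩ := exists_preimage_apply_eq_smul hYM hc hw hz
  have hz₀ : z₀ ≠ 0 := by rintro rfl; exact hNu (by simpa using hMz₀.symm)
  obtain ⟨m, hm, -⟩ := exists_nat_eq_of_apply_eq_smul hYN hMN hN hz₀ hYz₀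
    (by rw [hMz₀, ← Module.End.mul_apply, ← pow_succ']; exact hNu1)
  exact hnotNat m hm

lemma sub_smul_one_apply_eq_zero_of_sq (hYM : ⁅Y, M⁆ = (2 : K) • M)
    (hYN : ⁅Y, N⁆ = -((2 : K) • N)) (hMN : ⁅M, N⁆ = Y) (ℓ : ℕ) {x : V} (hMx : M x = 0)
    (h : ((Y - (ℓ : K) • 1 : End K V) ^ 2) x = 0) : (Y - (ℓ : K) • 1) x = 0 := by
  have hY (v : V) : (Y - (ℓ : K) • 1) v = Y v - (ℓ : K) • v := rfl
  rw [sq, Module.End.mul_apply, hY, sub_eq_zero] at h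
  rw [hY] at h ⊢
  refine eq_zero_of_pow_apply_mem_range hYM hYN hMN ?_ h
    ⟨((ℓ : K) + 1)⁻¹ • (N ^ (ℓ + 1)) x, ?_⟩
  · rw [map_sub, map_smul, hMx, apply_mem_ker_of_lie_eq_smul hYM hMx, smul_zero, sub_zero]
  · rw [map_smul, apply_pow_succ_apply hYN hMN, hMx, map_zero, zero_add, smul_smul,
      inv_mul_cancel₀ (Nat.cast_add_one_ne_zero ℓ), one_smul]

lemma ker_le_map_sup_eigenspace (hYM : ⁅Y, M⁆ = (2 : K) • M)
    (hYN : ⁅Y, N⁆ = -((2 : K) • N)) (hMN : ⁅M, N⁆ = Y) (ℓ : ℕ) :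
    LinearMap.ker M ≤ (LinearMap.ker M).map (Y - (ℓ : K) • 1) ⊔
      (LinearMap.ker M ⊓ End.eigenspace Y ℓ) := by
  have hT (x : V) (hx : x ∈ LinearMap.ker M) : (Y - (ℓ : K) • 1) x ∈ LinearMap.ker M := by
    simp_all [apply_mem_ker_of_lie_eq_smul hYM]
  set S := (Y - (ℓ : K) • 1).restrict hT
  have hdisj : Disjoint (LinearMap.ker S) (LinearMap.range S) := by
    rw [Submodule.disjoint_def]
    rintro _ hSy ⟨y, rfl⟩
    ext
    refine sub_smul_one_apply_eq_zero_of_sq hYM hYN hMN ℓ y.2 ?_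
    rw [sq, Module.End.mul_apply]
    exact congrArg Subtype.val (LinearMap.mem_ker.1 hSy)
  have hsup : LinearMap.ker S ⊔ LinearMap.range S = ⊤ := by
    apply Submodule.eq_top_of_finrank_eq
    have := Submodule.finrank_sup_add_finrank_inf_eq (LinearMap.ker S) (LinearMap.range S)
    rw [hdisj.eq_bot, finrank_bot, add_zero] at this
    rw [this, add_comm, S.finrank_range_add_finrank_ker]
  intro x hx
  obtain ⟨a, ha, _, ⟨y, rfl⟩, hay⟩ :=
    Submodule.mem_sup.1 (hsup ▸ Submodule.mem_top : (⟨x, hx⟩ : LinearMap.ker M) ∈ _ ⊔ _)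
  obtain rfl : a + (Y - (ℓ : K) • 1) y = x := congrArg Subtype.val hay
  rw [add_comm]
  refine Submodule.add_mem_sup ⟨y, y.2, rfl⟩ ⟨a.2, ?_⟩
  have ha' := congrArg Subtype.val (LinearMap.mem_ker.1 ha)
  simpa [S, sub_eq_zero] using ha'

end StandardTriple

section Form

variable {K V : Type*} [Field K] [AddCommGroup V] [Module K V] {Q : LinearMap.BilinForm K V}

lemma form_pow_apply_left {N : End K V} (hN : ∀ u v, Q (N u) v = -Q u (N v)) (j : ℕ) (u v : V) :
    Q ((N ^ j) u) v = (-1) ^ j * Q u ((N ^ j) v) := by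
  induction j generalizing v with
  | zero => simp
  | succ j ih =>
    have hcomm (w : V) : (N ^ j) (N w) = N ((N ^ j) w) := by
      rw [← Module.End.mul_apply, ← pow_succ, pow_succ', Module.End.mul_apply]
    simp only [pow_succ', Module.End.mul_apply, hN, ih, hcomm]
    ring

lemma orthogonal_ker_eq_range [FiniteDimensional K V] (hQ : Q.Nondegenerate) (hrefl : Q.IsRefl)
    {M : End K V} (hM : ∀ u v, Q (M u) v = -Q u (M v)) :
    Q.orthogonal (LinearMap.ker M) = LinearMap.range M := by
  have hker : Q.orthogonal (LinearMap.range M) = LinearMap.ker M := by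
    ext x
    simp only [LinearMap.BilinForm.mem_orthogonal_iff, LinearMap.mem_range, forall_exists_index,
      forall_apply_eq_imp_iff, hM, neg_eq_zero, LinearMap.mem_ker]
    exact ⟨fun h ↦ hQ.2 _ fun y ↦ h y, fun h y ↦ by rw [h, map_zero]⟩
  rw [← hker, LinearMap.BilinForm.orthogonal_orthogonal hQ hrefl]

lemma eq_zero_of_forall_apply_pow_apply_eq_zero [CharZero K] [FiniteDimensional K V]
    (hQ : Q.Nondegenerate) (hrefl : Q.IsRefl) {M Y N : End K V}
    (hMskew : ∀ u v, Q (M u) v = -Q u (M v)) (hYskew : ∀ u v, Q (Y u) v = -Q u (Y v))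
    (hYM : ⁅Y, M⁆ = (2 : K) • M) (hYN : ⁅Y, N⁆ = -((2 : K) • N)) (hMN : ⁅M, N⁆ = Y) {ℓ : ℕ}
    {u : V} (hu : u ∈ LinearMap.ker M ⊓ End.eigenspace Y ℓ)
    (h : ∀ v ∈ LinearMap.ker M ⊓ End.eigenspace Y ℓ, Q v ((N ^ ℓ) u) = 0) : u = 0 := by
  have hYu : Y u = (ℓ : K) • u := End.mem_eigenspace_iff.1 hu.2
  have hYw : Y ((N ^ ℓ) u) = -(ℓ : K) • (N ^ ℓ) u := by
    rw [apply_pow_apply_of_lie_eq_smul (c := -2) (by rw [hYN, neg_smul]) hYu]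
    ring_nf
  refine eq_zero_of_pow_apply_mem_range hYM hYN hMN hu.1 hYu ?_
  rw [← orthogonal_ker_eq_range hQ hrefl hMskew, LinearMap.BilinForm.mem_orthogonal_iff]
  intro y hy
  obtain ⟨_, ⟨y', -, rfl⟩, p, hp, rfl⟩ :=
    Submodule.mem_sup.1 (ker_le_map_sup_eigenspace hYM hYN hMN ℓ hy)
  simp [h p hp, hYskew, hYw]

lemma even_finrank_of_skew [NeZero (2 : K)] [FiniteDimensional K V] (hQ : Q.Nondegenerate)
    (hskew : ∀ u v, Q u v = -Q v u) : Even (finrank K V) := by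
  set A := LinearMap.BilinForm.toMatrix (Module.finBasis K V) Q
  have hdet : A.det ≠ 0 := (LinearMap.BilinForm.nondegenerate_iff_det_ne_zero _).1 hQ
  have hA : A.transpose = -A := by
    ext i j
    simp [A, LinearMap.BilinForm.toMatrix_apply, hskew (Module.finBasis K V j)]
  by_contra hodd
  have h : A.det = -A.det := by
    conv_lhs => rw [← Matrix.det_transpose, hA]
    rw [Matrix.det_neg, Fintype.card_fin, (Nat.not_even_iff_odd.1 hodd).neg_one_pow, neg_one_mul]
  have h2 : (2 : K) * A.det = 0 := by linear_combination h
  exact hdet ((mul_eq_zero.1 h2).resolve_left two_ne_zero)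

end Form

/-- **Multiplicity parity.**
Let `Q` be a nondegenerate `(-1)^k`-symmetric bilinear form on a finite-dimensional vector
space `V` over a field of characteristic zero, and let `N` be the nilnegative element of a
standard triple `{M,Y,N}` of `Q`-skew endomorphisms.  If `k + ℓ` is odd, then the
multiplicity `m_ℓ` of the `(ℓ+1)`-dimensional irreducible `sl₂`-module in `V` — namely the
dimension of the highest weight space `P(ℓ) = ker M ∩ {Y = ℓ}` — is even. -/
theorem multiplicity_even_of_odd_weight
    (K : Type*) [Field K] [CharZero K]
    (V : Type*) [AddCommGroup V] [Module K V] [FiniteDimensional K V]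
    (k : ℕ) (Q : V →ₗ[K] V →ₗ[K] K)
    (hnondeg : ∀ u : V, (∀ v : V, Q u v = 0) → u = 0)
    (hsymm : ∀ u v : V, Q u v = (-1 : K) ^ k * Q v u)
    (M Y N : Module.End K V)
    (hMskew : ∀ u v : V, Q (M u) v = -Q u (M v))
    (hYskew : ∀ u v : V, Q (Y u) v = -Q u (Y v))
    (hNskew : ∀ u v : V, Q (N u) v = -Q u (N v))
    (h1 : ⁅Y, M⁆ = (2 : K) • M)
    (h2 : ⁅Y, N⁆ = -((2 : K) • N))
    (h3 : ⁅M, N⁆ = Y)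
    (ℓ : ℕ) (hodd : Odd (k + ℓ)) :
    Even (Module.finrank K
      ↥(LinearMap.ker M ⊓ Module.End.eigenspace Y (ℓ : K))) := by
  have hrefl : LinearMap.BilinForm.IsRefl Q := fun u v huv ↦ by rw [hsymm, huv, mul_zero]
  have hQ : LinearMap.BilinForm.Nondegenerate Q :=
    hrefl.nondegenerate_iff_separatingLeft.2 hnondeg
  set P := LinearMap.ker M ⊓ Module.End.eigenspace Y (ℓ : K)
  set β : LinearMap.BilinForm K P := Q.compl₁₂ P.subtype ((N ^ ℓ) ∘ₗ P.subtype)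
  have hskew (u v : P) : β u v = -β v u := by
    have hsign : (-1 : K) ^ ℓ * (-1) ^ k = -1 := by rw [← pow_add, add_comm, hodd.neg_one_pow]
    simp only [β, LinearMap.compl₁₂_apply, Submodule.subtype_apply, LinearMap.comp_apply]
    rw [hsymm v, form_pow_apply_left hNskew]
    linear_combination Q u ((N ^ ℓ) v) * hsign
  refine even_finrank_of_skew ?_ hskew
  have hβrefl : β.IsRefl := fun u v huv ↦ by rw [hskew, huv, neg_zero]
  refine hβrefl.nondegenerate_iff_separatingRight.2 fun u hu ↦ Subtype.ext ?_
  exact eq_zero_of_forall_apply_pow_apply_eq_zero hQ hrefl hMskew hYskew h1 h2 h3 u.2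
    fun v hv ↦ hu ⟨v, hv⟩
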